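/- Let G be a directed graph on vertex set V containing the arc (t,s), with t ≠ s. Then ∑_{F ⊆ V \ {t}} (-1)^{|F|} · N(F) equals the number of Hamiltonian cycles of G containing the arc (t,s), where N(F) denotes the number of out-branchings rooted at s in the graph G with all arcs leaving vertices in F deleted. Equivalently: an out-branching B rooted at s contributes ∑_{F ⊆ sinks(B) \ {t}} (-1)^{|F|}, which is 1 if B is a Hamiltonian path from s to t and 0 otherwise. -/

import Mathlib

/-!
Swapping the two sums, an out-branching `B` rooted at `s` is counted with weight
`∑_{F ⊆ sinks(B) \ {t}} (-1)^|F|`, which is `1` if `t` is the only sink of `B` and `0` otherwise.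
-/

open scoped Classical

/-- `X` is an out-branching (spanning arborescence) rooted at `s` in the
    directed graph with arc set a subset of `V × V`. -/
def IsOutBranching {V : Type} (X : Finset (V × V)) (s : V) : Prop :=
  (∀ v : V, v ≠ s → ∃! e, e ∈ X ∧ e.2 = v) ∧
  (∀ e ∈ X, e.2 ≠ s) ∧
  (∀ v : V, Relation.ReflTransGen (fun a b => (a, b) ∈ X) s v)

namespace Finset

theorem filter_subset_powerset_eq_powerset_inter {β : Type*} [DecidableEq β] (U S : Finset β) :
    {F ∈ U.powerset | F ⊆ S} = (U ∩ S).powerset := by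
  ext F
  simp only [mem_filter, mem_powerset, subset_inter_iff]

theorem sum_powerset_neg_one_pow_mul_card_filter_subset {α β : Type*} [DecidableEq β]
    (U : Finset β) (B : Finset α) (S : α → Finset β) :
    ∑ F ∈ U.powerset, (-1 : ℤ) ^ #F * #{X ∈ B | F ⊆ S X} = #{X ∈ B | Disjoint U (S X)} := by
  have weight (X : α) :
      ∑ F ∈ U.powerset, (if F ⊆ S X then (-1 : ℤ) ^ #F else 0)
        = if Disjoint U (S X) then 1 else 0 := by
    rw [← sum_filter, filter_subset_powerset_eq_powerset_inter, sum_powerset_neg_one_pow_card]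
    simp only [disjoint_iff_inter_eq_empty]
  simp_rw [natCast_card_filter, mul_sum, mul_boole]
  rw [sum_comm]
  exact sum_congr rfl fun X _ => weight X

end Finset

open Finset

noncomputable def sinks {V : Type} [Fintype V] (X : Finset (V × V)) : Finset V :=
  {v | ∀ e ∈ X, e.1 ≠ v}

theorem subset_sinks_iff {V : Type} [Fintype V] {X : Finset (V × V)} {F : Finset V} :
    F ⊆ sinks X ↔ ∀ e ∈ X, e.1 ∉ F := by
  simp only [sinks, subset_iff, mem_filter, mem_univ, true_and]
  exact ⟨fun h e he heF => h heF e he rfl, fun h v hv e he hev => h e he (hev ▸ hv)⟩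

theorem disjoint_erase_sinks_iff {V : Type} [Fintype V] [DecidableEq V] {X : Finset (V × V)}
    {t : V} : Disjoint (univ.erase t) (sinks X) ↔ ∀ v : V, (∀ e ∈ X, e.1 ≠ v) → v = t := by
  simp only [disjoint_left, sinks, mem_erase, mem_filter, mem_univ, true_and, and_true]
  exact ⟨fun h v hv => by_contra fun hvt => h hvt hv, fun h v hvt hv => hvt (h v hv)⟩

theorem hamiltonian_cycles_inclusion_exclusion_general
    {V : Type} [Fintype V] [DecidableEq V]
    (A : Finset (V × V))
    (s t : V) :
    (∑ F ∈ ((Finset.univ : Finset V).erase t).powerset,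
        (-1 : ℤ) ^ F.card *
          ((A.powerset.filter fun X =>
              (∀ e ∈ X, e.1 ∉ F) ∧ IsOutBranching X s).card : ℤ))
    = ((A.powerset.filter fun X =>
          IsOutBranching X s ∧ ∀ v : V, (∀ e ∈ X, e.1 ≠ v) → v = t).card : ℤ) := by
  simp_rw [← subset_sinks_iff, ← disjoint_erase_sinks_iff, and_comm (a := _ ⊆ sinks _),
    ← filter_filter]
  exact sum_powerset_neg_one_pow_mul_card_filter_subset _ _ _

/-- Inclusion–exclusion for counting Hamiltonian cycles through the arc (t,s):
    ∑_{F ⊆ V∖{t}} (-1)^{|F|}·N(F), where N(F) counts out-branchings rooted at s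
    avoiding arcs leaving F, equals the number of out-branchings rooted at s
    whose unique sink is t (equivalently, Hamiltonian paths from s to t, i.e.
    Hamiltonian cycles of G containing the arc (t,s)). -/
theorem hamiltonian_cycles_inclusion_exclusion
    {V : Type} [Fintype V] [DecidableEq V]
    (A : Finset (V × V)) (hloop : ∀ e ∈ A, e.1 ≠ e.2)
    (s t : V) (hts : t ≠ s) (hA : (t, s) ∈ A) :
    (∑ F ∈ ((Finset.univ : Finset V).erase t).powerset,
        (-1 : ℤ) ^ F.card *
          ((A.powerset.filter fun X =>
              (∀ e ∈ X, e.1 ∉ F) ∧ IsOutBranching X s).card : ℤ))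
    = ((A.powerset.filter fun X =>
          IsOutBranching X s ∧ ∀ v : V, (∀ e ∈ X, e.1 ≠ v) → v = t).card : ℤ) :=
  hamiltonian_cycles_inclusion_exclusion_general A s t
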